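/- arXiv:cs/0202036 — 3 statements merged into one kernel-verified Lean document; each statement's English description precedes it below -/
import Mathlib

section
/- Let X be a set of variables, let V_0 be a finite set of constraint applications with constants over X in which the only constant occurring is 0 and in which every constraint used is complementive, and let V_f be the set of constraint applications obtained from V_0 by replacing every occurrence of the constant 0 by a fresh variable f ∉ X. Then for every assignment α : X → {0,1}: the assignment extending α by f ↦ 0 satisfies V_f if and only if α satisfies V_0, and the assignment extending α by f ↦ 1 satisfies V_f if and only if the complemented assignment ᾱ (defined by ᾱ(x) = 1 − α(x)) satisfies V_0. -/
/-- A constraint application with constants over a variable set `X`: a `k`-ary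
Boolean constraint `C` whose arguments are variables (`Sum.inl`) or Boolean
constants (`Sum.inr`). -/
structure CAppC (X : Type) where
  k : ℕ
  C : (Fin k → Bool) → Bool
  args : Fin k → X ⊕ Bool

/-- An assignment `I` satisfies a constraint application with constants. -/
def CAppC.sat {X : Type} (A : CAppC X) (I : X → Bool) : Prop :=
  A.C (fun i => Sum.elim I id (A.args i)) = true

/-- A constraint application over `X ⊕ Unit`: all variable arguments kept,
every constant argument replaced by the fresh variable `f = Sum.inr ()`. -/
structure CApp (X : Type) where
  k : ℕ
  C : (Fin k → Bool) → Bool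
  vars : Fin k → X

/-- An assignment `I` satisfies a constraint application. -/
def CApp.sat {X : Type} (A : CApp X) (I : X → Bool) : Prop :=
  A.C (fun i => I (A.vars i)) = true

/-- Replace every constant occurring in `A` by the fresh variable
`Sum.inr ()`. -/
def CAppC.toF {X : Type} (A : CAppC X) : CApp (X ⊕ Unit) :=
  ⟨A.k, A.C, fun i => Sum.elim Sum.inl (fun _ => Sum.inr ()) (A.args i)⟩

/- Setting `f := 0` turns each application of `V_f` back into the corresponding one of `V_0`,
since `0` is the only constant there. Setting `f := 1` gives the componentwise complement of
the arguments of `V_0` under `ᾱ`, which a complementive constraint cannot distinguish. -/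

def Complementive {k : ℕ} (C : (Fin k → Bool) → Bool) : Prop :=
  ∀ s, C s = C fun i => !(s i)

namespace CAppC

variable {X : Type}

theorem sat_toF_iff (A : CAppC X) (α : X → Bool) (b : Bool) :
    A.toF.sat (Sum.elim α fun _ => b) ↔
      A.C (fun i => Sum.elim α (fun _ => b) (A.args i)) = true := by
  unfold toF CApp.sat
  refine Eq.congr_left (congrArg A.C (funext fun i => ?_))
  dsimp only
  cases A.args i <;> rfl

theorem sat_toF_false_iff (A : CAppC X) (hA : ∀ i, A.args i ≠ Sum.inr true) (α : X → Bool) :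
    A.toF.sat (Sum.elim α fun _ => false) ↔ A.sat α := by
  rw [sat_toF_iff]
  refine Eq.congr_left (congrArg A.C (funext fun i => ?_))
  rcases h : A.args i with x | (_ | _)
  · rfl
  · rfl
  · exact absurd h (hA i)

theorem sat_toF_true_iff (A : CAppC X) (hA : ∀ i, A.args i ≠ Sum.inr true)
    (hC : Complementive A.C) (α : X → Bool) :
    A.toF.sat (Sum.elim α fun _ => true) ↔ A.sat fun x => !(α x) := by
  have hneg : (fun i => Sum.elim α (fun _ => true) (A.args i)) =
      fun i => !Sum.elim (fun x => !(α x)) (fun _ => false) (A.args i) := by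
    funext i
    cases A.args i <;> simp
  rw [sat_toF_iff, hneg, ← hC, ← sat_toF_iff, sat_toF_false_iff A hA]

end CAppC

/-- Let `V_0` be a finite set of constraint applications with constants whose
only occurring constant is `0` and whose constraints are all complementive,
and let `V_f` replace every constant `0` by a fresh variable `f`. Then for
every assignment `α`: extending `α` by `f ↦ 0` satisfies `V_f` iff `α`
satisfies `V_0`, and extending `α` by `f ↦ 1` satisfies `V_f` iff the
complemented assignment `ᾱ` satisfies `V_0`. -/
theorem stmt_8 {X : Type} (V0 : Finset (CAppC X))
    (hconst : ∀ A ∈ V0, ∀ i : Fin A.k, A.args i ≠ Sum.inr true)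
    (hcompl : ∀ A ∈ V0, ∀ s : Fin A.k → Bool, A.C s = A.C (fun i => !(s i))) :
    ∀ α : X → Bool,
      ((∀ A ∈ V0, (CAppC.toF A).sat (Sum.elim α fun _ => false)) ↔
        (∀ A ∈ V0, A.sat α)) ∧
      ((∀ A ∈ V0, (CAppC.toF A).sat (Sum.elim α fun _ => true)) ↔
        (∀ A ∈ V0, A.sat fun x => !(α x))) := fun α =>
  ⟨forall₂_congr fun A hA => A.sat_toF_false_iff (hconst A hA) α,
    forall₂_congr fun A hA => A.sat_toF_true_iff (hconst A hA) (hcompl A hA) α⟩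
end

section
/- Let V_0 be a finite set of constraint applications with constants over the three variables x, y, z in which the only constant occurring is 0, in which every constraint used is complementive, and such that an assignment satisfies V_0 if and only if it satisfies (¬x ∧ ¬y ∧ ¬z) ∨ (x ∧ ¬y ∧ z) ∨ (¬x ∧ y ∧ z). Let V_f be obtained from V_0 by replacing every occurrence of the constant 0 by a fresh variable f, and let W(u,v) be obtained from V_f by substituting the variable x by f, y by u, and z by v. Then an assignment (f, u, v) ∈ {0,1}^3 satisfies W(u,v) if and only if u = v. -/
/-! Renaming the constant `0` to `f` and complementing all arguments when `f = 1` (harmless,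
since the constraints are complementive) shows that `(f, u, v)` satisfies `W(u,v)` exactly when
`(0, f xor u, f xor v)` satisfies `V_0`. The models of the formula with first coordinate `0`
are `(0, 0, 0)` and `(0, 1, 1)`. -/

namespace CAppC

variable {X : Type} (A : CAppC X)

theorem toF_arg_eq_xor (hA : ∀ i, A.args i ≠ Sum.inr true) (I : X → Bool) (f : Bool)
    (i : Fin A.k) :
    Sum.elim I (fun _ => f) (A.toF.vars i) =
      xor f (Sum.elim (fun x => xor f (I x)) id (A.args i)) := by
  rcases hi : A.args i with x | (_ | _)
  · simp [toF, hi]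
  · simp [toF, hi]
  · exact absurd hi (hA i)

theorem toF_sat_iff (hA : ∀ i, A.args i ≠ Sum.inr true)
    (hC : ∀ s : Fin A.k → Bool, A.C s = A.C (fun i => !(s i))) (I : X → Bool) (f : Bool) :
    A.toF.sat (Sum.elim I fun _ => f) ↔ A.sat (fun x => xor f (I x)) := by
  change A.C (fun i => Sum.elim I (fun _ => f) (A.toF.vars i)) = true ↔ _
  rw [funext (toF_arg_eq_xor A hA I f)]
  cases f
  · simp only [Bool.false_xor]
    rfl
  · rw [hC]
    simp only [Bool.true_xor, Bool.not_not]
    rfl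

end CAppC

/-- Let `V_0` be a finite set of constraint applications with constants over
the variables `x = 0`, `y = 1`, `z = 2` whose only occurring constant is `0`,
whose constraints are all complementive, and which is equivalent to
`(¬x ∧ ¬y ∧ ¬z) ∨ (x ∧ ¬y ∧ z) ∨ (¬x ∧ y ∧ z)`. Let `V_f` replace every
constant `0` by a fresh variable `f` and let `W(u,v)` substitute `x := f`,
`y := u`, `z := v` in `V_f`. Then `(f, u, v)` satisfies `W(u,v)` iff
`u = v`. -/
theorem stmt_10 (V0 : Finset (CAppC (Fin 3)))
    (hconst : ∀ A ∈ V0, ∀ i : Fin A.k, A.args i ≠ Sum.inr true)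
    (hcompl : ∀ A ∈ V0, ∀ s : Fin A.k → Bool, A.C s = A.C (fun i => !(s i)))
    (hequiv : ∀ I : Fin 3 → Bool, (∀ A ∈ V0, A.sat I) ↔
      ((!(I 0) && !(I 1) && !(I 2)) || (I 0 && !(I 1) && I 2) ||
        (!(I 0) && I 1 && I 2)) = true) :
    ∀ f u v : Bool,
      (∀ A ∈ V0, (CAppC.toF A).sat (Sum.elim ![f, u, v] fun _ => f)) ↔ u = v := by
  intro f u v
  have hW : (∀ A ∈ V0, A.toF.sat (Sum.elim ![f, u, v] fun _ => f)) ↔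
      ∀ A ∈ V0, A.sat (fun x => xor f (![f, u, v] x)) :=
    forall₂_congr fun A hA => A.toF_sat_iff (hconst A hA) (hcompl A hA) _ f
  rw [hW, hequiv]
  cases f <;> cases u <;> cases v <;> decide
end

section
/- Let G and H be simple graphs on the vertex set {1,…,n}, and over the variables x_1,…,x_n define S(G) = {x_i ∨ x_j : {i,j} is an edge of G} and likewise S(H), where x ∨ y is the binary OR constraint. Then G and H are isomorphic as graphs if and only if there exists a permutation π of {x_1,…,x_n} such that π(S(G)) is equivalent to S(H). -/
/-- Renaming the variables of a constraint application by a permutation `π`. -/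
def CApp.rename {X : Type} (π : Equiv.Perm X) (A : CApp X) : CApp X :=
  ⟨A.k, A.C, fun i => π (A.vars i)⟩

/-- The binary OR constraint applied to the variables `x_i`, `x_j`. -/
def orApp {n : ℕ} (i j : Fin n) : CApp (Fin n) :=
  ⟨2, fun v => v 0 || v 1, ![i, j]⟩

/-- The encoding `S(G) = {x_i ∨ x_j : {i,j} ∈ E(G)}` of a graph `G`. -/
def SOr {n : ℕ} (G : SimpleGraph (Fin n)) : Set (CApp (Fin n)) :=
  {A | ∃ i j : Fin n, G.Adj i j ∧ A = orApp i j}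

/-! The assignments satisfying `S(G)` are the indicators of the vertex covers of `G`, and renaming
by `π` pulls a cover back along `π`; so an isomorphism is a permutation matching the covers. For
the converse, the set of all vertices but `π a, π b` covers `H` iff `π a, π b` are non-adjacent, and
its preimage covers `G` iff `a, b` are non-adjacent. -/

open SimpleGraph

theorem CApp.sat_rename {X : Type} (π : Equiv.Perm X) (A : CApp X) (I : X → Bool) :
    (A.rename π).sat I ↔ A.sat (I ∘ π) :=
  Iff.rfl

theorem forall_sat_SOr_iff_isVertexCover {n : ℕ} (G : SimpleGraph (Fin n)) (I : Fin n → Bool) :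
    (∀ A ∈ SOr G, A.sat I) ↔ G.IsVertexCover {x | I x} := by
  constructor
  · intro h i j hij
    simpa [CApp.sat, orApp] using h (orApp i j) ⟨i, j, hij, rfl⟩
  · rintro h A ⟨i, j, hij, rfl⟩
    simpa [CApp.sat, orApp] using h hij

theorem forall_sat_rename_SOr_iff_isVertexCover {n : ℕ} (G : SimpleGraph (Fin n))
    (π : Equiv.Perm (Fin n)) (I : Fin n → Bool) :
    (∀ A ∈ SOr G, (A.rename π).sat I) ↔ G.IsVertexCover (π ⁻¹' {x | I x}) := by
  simp only [CApp.sat_rename, forall_sat_SOr_iff_isVertexCover]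
  rfl

theorem SimpleGraph.isIndepSet_pair_iff {V : Type*} {G : SimpleGraph V} {a b : V} :
    G.IsIndepSet {a, b} ↔ ¬G.Adj a b := by
  rw [isIndepSet_iff, Set.pairwise_pair]
  exact ⟨fun h hab => (h hab.ne).1 hab, fun h _ => ⟨h, fun hba => h hba.symm⟩⟩

theorem SimpleGraph.adj_congr_of_isVertexCover_preimage_iff {V W : Type*}
    {G : SimpleGraph V} {H : SimpleGraph W} (e : V ≃ W)
    (h : ∀ I : W → Bool, G.IsVertexCover (e ⁻¹' {x | I x}) ↔ H.IsVertexCover {x | I x})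
    (a b : V) : H.Adj (e a) (e b) ↔ G.Adj a b := by
  classical
  have hab := h (fun x => decide (x ∈ ({e a, e b} : Set W)ᶜ))
  simp only [decide_eq_true_eq, Set.ofPred_mem_eq, isVertexCover_compl, Set.preimage_compl,
    ← Equiv.image_symm_eq_preimage, Set.image_pair, Equiv.symm_apply_apply,
    isIndepSet_pair_iff] at hab
  exact not_iff_not.mp hab.symm

/-- Two graphs `G` and `H` on vertex set `{1,…,n}` are isomorphic iff there is
a permutation `π` of the variables `x_1, …, x_n` such that `π(S(G))` is
equivalent to `S(H)`. -/
theorem stmt_14 {n : ℕ} (G H : SimpleGraph (Fin n)) :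
    Nonempty (G ≃g H) ↔
      ∃ π : Equiv.Perm (Fin n), ∀ I : Fin n → Bool,
        (∀ A ∈ SOr G, (A.rename π).sat I) ↔ (∀ A ∈ SOr H, A.sat I) := by
  simp only [forall_sat_rename_SOr_iff_isVertexCover, forall_sat_SOr_iff_isVertexCover]
  constructor
  · rintro ⟨φ⟩
    exact ⟨φ.toEquiv, fun I => isVertexCover_preimage_iso φ⟩
  · rintro ⟨π, hπ⟩
    exact ⟨⟨π, adj_congr_of_isVertexCover_preimage_iff π hπ _ _⟩⟩
end
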